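/- arXiv:1710.09156 — 2 statements merged into one kernel-verified Lean document; each statement's English description precedes it below -/
import Mathlib

section
/- For N = 4 and g = (2, 1, 2)ᵀ ∈ ℤ³ (which satisfies S_4[g] = 0), every K ∈ Γ_4 has the property that the first and the third entry of Kg are even; in particular there is no K ∈ Γ_4 with Kg = (±1, 0, 0)ᵀ, so the cancellation statement of Lemma 1(a) fails for N = 4. -/
open Matrix Pointwise

noncomputable section

/-- The even symmetric matrix `S_N` of signature `(1,2)`, over `ℤ`. -/
def SNint (N : ℕ) : Matrix (Fin 3) (Fin 3) ℤ :=
  !![0, 0, 1; 0, -2 * (N : ℤ), 0; 1, 0, 0]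

/-- The even symmetric matrix `S_N` of signature `(1,2)`, over `ℝ`. -/
def SN (N : ℕ) : Matrix (Fin 3) (Fin 3) ℝ :=
  !![0, 0, 1; 0, -2 * (N : ℝ), 0; 1, 0, 0]

/-- The even symmetric matrix `Ŝ_N = [[0,0,1],[0,S_N,0],[1,0,0]]` of signature `(2,3)`, over `ℤ`. -/
def SNhatInt (N : ℕ) : Matrix (Fin 5) (Fin 5) ℤ :=
  !![0,0,0,0,1; 0,0,0,1,0; 0,0,-2*(N:ℤ),0,0; 0,1,0,0,0; 1,0,0,0,0]

/-- The even symmetric matrix `Ŝ_N`, over `ℝ`. -/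
def SNhat (N : ℕ) : Matrix (Fin 5) (Fin 5) ℝ :=
  !![0,0,0,0,1; 0,0,0,1,0; 0,0,-2*(N:ℝ),0,0; 0,1,0,0,0; 1,0,0,0,0]

/-- The special orthogonal group of a real symmetric matrix `S`:
`{K ∈ SL(ℝ) : S[K] = KᵀSK = S}`. -/
def SOset {n : ℕ} (S : Matrix (Fin n) (Fin n) ℝ) : Set (Matrix (Fin n) (Fin n) ℝ) :=
  {K | K.det = 1 ∧ Kᵀ * S * K = S}

/-- `SO₀(S;ℝ)`: the connected component of the identity in `SO(S;ℝ)`. -/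
def SOzero {n : ℕ} (S : Matrix (Fin n) (Fin n) ℝ) : Set (Matrix (Fin n) (Fin n) ℝ) :=
  connectedComponentIn (SOset S) 1

/-- Entrywise cast of an integer matrix to a real matrix. -/
def matCast {n : ℕ} (K : Matrix (Fin n) (Fin n) ℤ) : Matrix (Fin n) (Fin n) ℝ :=
  K.map fun z => (z : ℝ)

/-- A real matrix is integral if all its entries are integers. -/
def IsIntegralMat {n : ℕ} (K : Matrix (Fin n) (Fin n) ℝ) : Prop :=
  ∀ i j, ∃ z : ℤ, K i j = z

/-- A real matrix is rational if all its entries are rational numbers. -/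
def IsRationalMat {n : ℕ} (K : Matrix (Fin n) (Fin n) ℝ) : Prop :=
  ∀ i j, ∃ q : ℚ, K i j = q

/-- `Γ_N = SO₀(S_N;ℤ)`, the integral matrices in `SO₀(S_N;ℝ)`. -/
def GammaN (N : ℕ) : Set (Matrix (Fin 3) (Fin 3) ℝ) :=
  {K | K ∈ SOzero (SN N) ∧ IsIntegralMat K}

/-- `Γ̂_N = SO₀(Ŝ_N;ℤ)`, the integral matrices in `SO₀(Ŝ_N;ℝ)`. -/
def GammaHat (N : ℕ) : Set (Matrix (Fin 5) (Fin 5) ℝ) :=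
  {M | M ∈ SOzero (SNhat N) ∧ IsIntegralMat M}

/-- `𝒢_N = SO₀(S_N;ℚ)`, the rational matrices in `SO₀(S_N;ℝ)`. -/
def GN (N : ℕ) : Set (Matrix (Fin 3) (Fin 3) ℝ) :=
  {K | K ∈ SOzero (SN N) ∧ IsRationalMat K}

/-- `𝒢̂_N = SO₀(Ŝ_N;ℚ)`, the rational matrices in `SO₀(Ŝ_N;ℝ)`. -/
def GhatN (N : ℕ) : Set (Matrix (Fin 5) (Fin 5) ℝ) :=
  {M | M ∈ SOzero (SNhat N) ∧ IsRationalMat M}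

/-!
Reduce `Kᵀ S_N K = S_N` modulo `2`. The middle entry `-2N` of `S_N` disappears, and what remains
of the entries off the diagonal forces the entries `K₀₁, K₂₁` of the middle column of an integral
`K` to be even. Hence `Kg ≡ K e₁ ≡ 0` modulo `2` in the first and third entry when
`g = (2, 1, 2)ᵀ`, and `Kg = (±1, 0, 0)ᵀ` is impossible.
-/

/-- Over `𝔽₂` the form `ω(x, y) = x₀y₁ + x₁y₀` is alternating and nondegenerate, so `ω(u, w) = 1`
makes `u, w` a basis, and a vector orthogonal to both vanishes. -/
lemma ZMod.two_eq_zero_of_orthogonal_of_hyperbolic (u₀ u₁ v₀ v₁ w₀ w₁ : ZMod 2)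
    (huw : u₀ * w₁ + u₁ * w₀ = 1) (huv : u₀ * v₁ + u₁ * v₀ = 0) (hvw : v₀ * w₁ + v₁ * w₀ = 0) :
    v₀ = 0 ∧ v₁ = 0 := by
  revert u₀ u₁ v₀ v₁ w₀ w₁
  decide

lemma IsIntegralMat.exists_eq_matCast {n : ℕ} {K : Matrix (Fin n) (Fin n) ℝ}
    (hK : IsIntegralMat K) : ∃ Z : Matrix (Fin n) (Fin n) ℤ, K = matCast Z := by
  choose z hz using hK
  exact ⟨Matrix.of z, Matrix.ext hz⟩

lemma matCast_SNint (N : ℕ) : matCast (SNint N) = SN N := by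
  ext i j
  fin_cases i <;> fin_cases j <;> simp [matCast, SNint, SN]

lemma transpose_mul_SNint_mul_eq_of_matCast_mem_SOset {N : ℕ} {Z : Matrix (Fin 3) (Fin 3) ℤ}
    (hZ : matCast Z ∈ SOset (SN N)) : Zᵀ * SNint N * Z = SNint N := by
  have h := hZ.2
  rw [← matCast_SNint] at h
  apply Matrix.map_injective (f := ⇑(Int.castRingHom ℝ)) Int.cast_injective
  beta_reduce
  rw [Matrix.map_mul, Matrix.map_mul, Matrix.transpose_map]
  exact h

/-- Modulo `2`, the entries `(0,2)`, `(0,1)`, `(1,2)` of `Zᵀ S_N Z = S_N` say that, for the form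
`ω` on rows `0, 2`, the columns `0, 2` form a hyperbolic pair orthogonal to column `1`. -/
lemma two_dvd_middle_column {N : ℕ} {Z : Matrix (Fin 3) (Fin 3) ℤ}
    (hZ : Zᵀ * SNint N * Z = SNint N) : 2 ∣ Z 0 1 ∧ 2 ∣ Z 2 1 := by
  have entry (i j : Fin 3) : ((Zᵀ * SNint N * Z) i j : ZMod 2) = (SNint N i j : ZMod 2) := by
    rw [hZ]
  have e02 := entry 0 2
  have e01 := entry 0 1
  have e12 := entry 1 2
  simp only [SNint, Matrix.mul_apply, transpose_apply, of_apply, Fin.sum_univ_three, cons_val',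
    cons_val_fin_one, cons_val_zero, cons_val_one, cons_val, Int.cast_add, Int.cast_mul,
    Int.cast_neg, Int.cast_ofNat, Int.cast_natCast, Int.cast_one, Int.cast_zero,
    show (2 : ZMod 2) = 0 from rfl] at e02 e01 e12
  obtain ⟨h01, h21⟩ := ZMod.two_eq_zero_of_orthogonal_of_hyperbolic (Z 0 0) (Z 2 0) (Z 0 1) (Z 2 1)
    (Z 0 2) (Z 2 2) (by linear_combination e02) (by linear_combination e01)
    (by linear_combination e12)
  simp only [ZMod.intCast_zmod_eq_zero_iff_dvd] at h01 h21
  exact ⟨h01, h21⟩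

lemma matCast_mulVec_two_one_two (Z : Matrix (Fin 3) (Fin 3) ℤ) (i : Fin 3) :
    (matCast Z *ᵥ ![(2 : ℝ), 1, 2]) i = ((2 * (Z i 0 + Z i 2) + Z i 1 : ℤ) : ℝ) := by
  simp only [mulVec, dotProduct, matCast, map_apply, Fin.sum_univ_three, cons_val_zero,
    cons_val_one, cons_val, mul_one, Int.cast_add, Int.cast_mul, Int.cast_ofNat]
  ring

/-- For `N = 4` and `g = (2,1,2)ᵀ` (isotropic for `S_4`), the first and third entry of `Kg`
are even for every `K ∈ Γ_4`; in particular no `K ∈ Γ_4` achieves `Kg = (±1,0,0)ᵀ`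
(`gcd(2,1,2) = 1`), so Lemma 1(a) fails for `N = 4`. -/
theorem lemma1a_fails_for_N_four :
    ((![2,1,2] : Fin 3 → ℤ) ⬝ᵥ (SNint 4).mulVec ![2,1,2] = 0) ∧
    (∀ K ∈ GammaN 4,
      (∃ a : ℤ, K.mulVec ![(2:ℝ),1,2] 0 = 2 * a) ∧
      (∃ b : ℤ, K.mulVec ![(2:ℝ),1,2] 2 = 2 * b)) ∧
    ¬ ∃ K ∈ GammaN 4, ∃ γ : ℤ, (γ = 1 ∨ γ = -1) ∧
        K.mulVec ![(2:ℝ),1,2] = ![(γ : ℝ), 0, 0] := by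
  have even_entries : ∀ K ∈ GammaN 4,
      (∃ a : ℤ, K.mulVec ![(2:ℝ),1,2] 0 = 2 * a) ∧
      (∃ b : ℤ, K.mulVec ![(2:ℝ),1,2] 2 = 2 * b) := by
    rintro K ⟨hK, hK_int⟩
    obtain ⟨Z, rfl⟩ := hK_int.exists_eq_matCast
    obtain ⟨⟨c, hc⟩, ⟨d, hd⟩⟩ := two_dvd_middle_column
      (transpose_mul_SNint_mul_eq_of_matCast_mem_SOset (connectedComponentIn_subset _ _ hK))
    refine ⟨⟨Z 0 0 + Z 0 2 + c, ?_⟩, ⟨Z 2 0 + Z 2 2 + d, ?_⟩⟩ <;>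
      rw [matCast_mulVec_two_one_two] <;> push_cast [hc, hd] <;> ring
  refine ⟨by decide, even_entries, ?_⟩
  rintro ⟨K, hK, γ, hγ, hKg⟩
  obtain ⟨⟨a, ha⟩, -⟩ := even_entries K hK
  rw [hKg, Matrix.cons_val_zero] at ha
  have : γ = 2 * a := by exact_mod_cast ha
  omega
end
end

section
/- Let N ∈ ℕ be squarefree with N > 1. Set M := (1/N)·diag(1, N, N², N) and let W_N = [[V_N, 0],[0, (V_Nᵀ)⁻¹]] with V_N = (1/√N)[[0, N],[−1, 0]]. Then Σ_N (W_N M W_N) Σ_N ≠ Σ_N M Σ_N; consequently the Hecke algebra of the pair (Σ_N, 𝔾) fails to be commutative for N > 1. -/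
open Matrix Pointwise

noncomputable section

/-- The symplectic form `J = [[0,-E₂],[E₂,0]]`. -/
def Jmat : Matrix (Fin 4) (Fin 4) ℝ :=
  !![0,0,-1,0; 0,0,0,-1; 1,0,0,0; 0,1,0,0]

/-- The real symplectic group `Sp₂(ℝ) = {M : MᵀJM = J}`. -/
def Sp2 : Set (Matrix (Fin 4) (Fin 4) ℝ) :=
  {M | Mᵀ * Jmat * M = Jmat}

/-- `𝔾 = {(1/√m)M ∈ Sp₂(ℝ) : M integral, m ∈ ℕ}`. -/
def GG : Set (Matrix (Fin 4) (Fin 4) ℝ) :=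
  {M | M ∈ Sp2 ∧ ∃ m : ℕ, 0 < m ∧ ∀ i j, ∃ z : ℤ, Real.sqrt m * M i j = (z : ℝ)}

/-- The paramodular integrality shape (11): entry `(2,4)` lies in `(1/N)ℤ`, entries
`(1,2), (3,2), (4,1), (4,2), (4,3)` lie in `Nℤ`, and all other entries lie in `ℤ`
(indices 1-based). -/
def pshape (N : ℕ) (M : Matrix (Fin 4) (Fin 4) ℝ) : Prop :=
  (∃ z : ℤ, M 1 3 = (z : ℝ) / N) ∧
  (∃ z : ℤ, M 0 1 = (N : ℝ) * z) ∧ (∃ z : ℤ, M 2 1 = (N : ℝ) * z) ∧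
  (∃ z : ℤ, M 3 0 = (N : ℝ) * z) ∧ (∃ z : ℤ, M 3 1 = (N : ℝ) * z) ∧
  (∃ z : ℤ, M 3 2 = (N : ℝ) * z) ∧
  (∃ z : ℤ, M 0 0 = (z : ℝ)) ∧ (∃ z : ℤ, M 0 2 = (z : ℝ)) ∧ (∃ z : ℤ, M 0 3 = (z : ℝ)) ∧
  (∃ z : ℤ, M 1 0 = (z : ℝ)) ∧ (∃ z : ℤ, M 1 1 = (z : ℝ)) ∧ (∃ z : ℤ, M 1 2 = (z : ℝ)) ∧
  (∃ z : ℤ, M 2 0 = (z : ℝ)) ∧ (∃ z : ℤ, M 2 2 = (z : ℝ)) ∧ (∃ z : ℤ, M 2 3 = (z : ℝ)) ∧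
  (∃ z : ℤ, M 3 3 = (z : ℝ))

/-- The paramodular group `Σ_N` of degree 2 and level `N`. -/
def SigmaN (N : ℕ) : Set (Matrix (Fin 4) (Fin 4) ℝ) :=
  {M | M ∈ Sp2 ∧ pshape N M}

/-- The `2×2` matrix `V_d = (1/√d)·[[αd, βN],[γ, δd]]`. -/
def Vd (N d : ℕ) (α β γ δ : ℤ) : Matrix (Fin 2) (Fin 2) ℝ :=
  (Real.sqrt d)⁻¹ • !![(α : ℝ) * d, (β : ℝ) * N; (γ : ℝ), (δ : ℝ) * d]

/-- The block diagonal `4×4` matrix `[[A, 0],[0, D]]` with `2×2` blocks. -/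
def fourBlock (A D : Matrix (Fin 2) (Fin 2) ℝ) : Matrix (Fin 4) (Fin 4) ℝ :=
  !![A 0 0, A 0 1, 0, 0;
     A 1 0, A 1 1, 0, 0;
     0, 0, D 0 0, D 0 1;
     0, 0, D 1 0, D 1 1]

/-- `W` is a matrix `W_d = [[V_d, 0],[0, (V_dᵀ)⁻¹]]` with `det V_d = 1` for `d ∣ N`. -/
def IsWd (N d : ℕ) (W : Matrix (Fin 4) (Fin 4) ℝ) : Prop :=
  d ∣ N ∧ ∃ α β γ δ : ℤ,
    (Vd N d α β γ δ).det = 1 ∧ W = fourBlock (Vd N d α β γ δ) ((Vd N d α β γ δ)ᵀ)⁻¹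

/-- The extended paramodular group `Σ*_N`: the subgroup generated by `Σ_N` and the
matrices `W_d`, `d ∣ N`, realized as the smallest subset containing the generators
and closed under the monoid/inverse operations. -/
def SigmaStar (N : ℕ) : Set (Matrix (Fin 4) (Fin 4) ℝ) :=
  ⋂₀ {G : Set (Matrix (Fin 4) (Fin 4) ℝ) |
      SigmaN N ⊆ G ∧ {W | ∃ d, IsWd N d W} ⊆ G ∧
      (1 : Matrix (Fin 4) (Fin 4) ℝ) ∈ G ∧
      (∀ x ∈ G, ∀ y ∈ G, x * y ∈ G) ∧ (∀ x ∈ G, x⁻¹ ∈ G)}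

/-- `ν(M)`: the set of `m ∈ ℕ` such that `√m · M` has the paramodular
integrality shape (11); `ν(M)` is its least element. -/
def nuSet (N : ℕ) (M : Matrix (Fin 4) (Fin 4) ℝ) : Set ℕ :=
  {m | 0 < m ∧ pshape N (Real.sqrt m • M)}

/-!
The second columns of elements of `Σ_N` lie in the lattice `L = Nℤ ⊕ ℤ ⊕ Nℤ ⊕ Nℤ`, and `L` is
stable under left multiplication by `Σ_N`. For `a ∈ Σ_N` and `b` with second column in `L`, the
`(2,2)` entry of `a M b` is an integer, since the factor `1/N` of `M = diag(1/N, 1, N, 1)` is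
absorbed by the `N` in the first coordinate of `L`. Conjugation by `W_N` also keeps second
columns in `L`, yet `(W_N M W_N)₂₂ = -1/N`. Hence `W_N M W_N ∉ Σ_N M Σ_N`, and
`W_N M ∈ (Σ_N W_N Σ_N)(Σ_N M Σ_N)` but `W_N M ∉ (Σ_N M Σ_N)(Σ_N W_N Σ_N)`, because
`a M b c W_N d W_N = a M (b c (W_N d W_N))`.
-/

lemma mem_mul_singleton_mul_self {α : Type*} [MulOneClass α] {s t : Set α}
    (hs : (1 : α) ∈ s) (ht : (1 : α) ∈ t) (a : α) : a ∈ s * {a} * t :=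
  DoubleCoset.mem_doubleCoset.2 ⟨1, hs, 1, ht, by simp⟩

lemma one_mem_SigmaN (N : ℕ) : (1 : Matrix (Fin 4) (Fin 4) ℝ) ∈ SigmaN N := by
  refine ⟨by simp [Sp2], ⟨0, ?_⟩, ⟨0, ?_⟩, ⟨0, ?_⟩, ⟨0, ?_⟩, ⟨0, ?_⟩, ⟨0, ?_⟩,
    ⟨1, ?_⟩, ⟨0, ?_⟩, ⟨0, ?_⟩, ⟨0, ?_⟩, ⟨1, ?_⟩, ⟨0, ?_⟩, ⟨0, ?_⟩, ⟨1, ?_⟩, ⟨0, ?_⟩, ⟨1, ?_⟩⟩ <;>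
  simp [one_apply]

def paramodularColumns (N : ℕ) : Set (Fin 4 → ℝ) :=
  {x | (∃ z : ℤ, x 0 = N * z) ∧ (∃ z : ℤ, x 1 = z) ∧
    (∃ z : ℤ, x 2 = N * z) ∧ (∃ z : ℤ, x 3 = N * z)}

section pshape

variable {N : ℕ} {σ X : Matrix (Fin 4) (Fin 4) ℝ}

lemma pshape.col_one_mem (hσ : pshape N σ) : (fun i => σ i 1) ∈ paramodularColumns N := by
  obtain ⟨-, h01, h21, -, h31, -, -, -, -, -, h11, -⟩ := hσ
  exact ⟨h01, h11, h21, h31⟩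

lemma pshape.col_one_mul_mem (hN : 0 < N) (hσ : pshape N σ)
    (hX : (fun i => X i 1) ∈ paramodularColumns N) :
    (fun i => (σ * X) i 1) ∈ paramodularColumns N := by
  have hN' : (N : ℝ) ≠ 0 := by positivity
  obtain ⟨⟨a13, h13⟩, ⟨a01, h01⟩, ⟨a21, h21⟩, ⟨a30, h30⟩, ⟨a31, h31⟩, ⟨a32, h32⟩,
    ⟨a00, h00⟩, ⟨a02, h02⟩, ⟨a03, h03⟩, ⟨a10, h10⟩, ⟨a11, h11⟩, ⟨a12, h12⟩,
    ⟨a20, h20⟩, ⟨a22, h22⟩, ⟨a23, h23⟩, ⟨a33, h33⟩⟩ := hσ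
  obtain ⟨⟨x0, hx0⟩, ⟨x1, hx1⟩, ⟨x2, hx2⟩, ⟨x3, hx3⟩⟩ := hX
  simp only at hx0 hx1 hx2 hx3
  refine ⟨⟨a00 * x0 + a01 * x1 + a02 * x2 + a03 * x3, ?_⟩,
    ⟨N * a10 * x0 + a11 * x1 + N * a12 * x2 + a13 * x3, ?_⟩,
    ⟨a20 * x0 + a21 * x1 + a22 * x2 + a23 * x3, ?_⟩,
    ⟨N * a30 * x0 + a31 * x1 + N * a32 * x2 + a33 * x3, ?_⟩⟩ <;>
  simp only [mul_apply, Fin.sum_univ_four, hx0, hx1, hx2, hx3, h00, h01, h02, h03, h10, h11,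
    h12, h13, h20, h21, h22, h23, h30, h31, h32, h33] <;>
  push_cast <;> field_simp

end pshape

def integralW (N : ℕ) : Matrix (Fin 4) (Fin 4) ℝ :=
  !![0, (N : ℝ), 0, 0; -1, 0, 0, 0; 0, 0, 0, 1; 0, 0, -(N : ℝ), 0]

def heckeDiag (N : ℕ) : Matrix (Fin 4) (Fin 4) ℝ :=
  (N : ℝ)⁻¹ • diagonal ![1, (N : ℝ), (N : ℝ) ^ 2, (N : ℝ)]

lemma fourBlock_eq_smul_integralW {N : ℕ} (hN : 0 < N) :
    fourBlock ((Real.sqrt N)⁻¹ • !![0, (N : ℝ); -1, 0])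
      (((Real.sqrt N)⁻¹ • !![0, (N : ℝ); -1, 0])ᵀ)⁻¹ = (Real.sqrt N)⁻¹ • integralW N := by
  have hN' : (N : ℝ) ≠ 0 := by positivity
  have hinv : (((Real.sqrt N)⁻¹ • !![0, (N : ℝ); -1, 0])ᵀ)⁻¹
      = (Real.sqrt N)⁻¹ • !![0, 1; -(N : ℝ), 0] := by
    refine inv_eq_left_inv ?_
    rw [transpose_smul, smul_mul_smul_comm, ← mul_inv, Real.mul_self_sqrt (Nat.cast_nonneg N)]
    ext i j
    fin_cases i <;> fin_cases j <;> simp only [Matrix.smul_apply, mul_apply, Fin.sum_univ_two] <;>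
      simp [hN']
  rw [hinv]
  ext i j
  fin_cases i <;> fin_cases j <;> simp [fourBlock, integralW]

lemma inv_sqrt_smul_mul_mul_inv_sqrt_smul {n : Type*} [Fintype n] {c : ℝ} (hc : 0 ≤ c)
    (A D : Matrix n n ℝ) :
    ((Real.sqrt c)⁻¹ • A) * D * ((Real.sqrt c)⁻¹ • A) = c⁻¹ • (A * D * A) := by
  rw [Matrix.smul_mul, Matrix.smul_mul, Matrix.mul_smul, smul_smul, ← mul_inv,
    Real.mul_self_sqrt hc]

section integralW

variable {N : ℕ}

lemma col_one_inv_smul_integralW_conj_mem (hN : 0 < N) {d : Matrix (Fin 4) (Fin 4) ℝ}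
    (hd : pshape N d) :
    (fun i => ((N : ℝ)⁻¹ • (integralW N * d * integralW N)) i 1) ∈ paramodularColumns N := by
  have hN' : (N : ℝ) ≠ 0 := by positivity
  obtain ⟨-, -, -, ⟨a30, h30⟩, -, -, ⟨a00, h00⟩, -, -, ⟨a10, h10⟩, -, -, ⟨a20, h20⟩, -⟩ := hd
  refine ⟨⟨a10, ?_⟩, ⟨-a00, ?_⟩, ⟨a30, ?_⟩, ⟨-a20, ?_⟩⟩ <;>
  simp only [Matrix.smul_apply, mul_apply, Fin.sum_univ_four] <;>
  simp [integralW, h00, h10, h20, h30] <;>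
  field_simp

lemma inv_smul_integralW_conj_heckeDiag_apply_one_one (hN : 0 < N) :
    ((N : ℝ)⁻¹ • (integralW N * heckeDiag N * integralW N)) 1 1 = -(N : ℝ)⁻¹ := by
  have hN' : (N : ℝ) ≠ 0 := by positivity
  simp only [Matrix.smul_apply, mul_apply, Fin.sum_univ_four]
  simp [integralW, heckeDiag, hN']

end integralW

lemma exists_int_eq_mul_heckeDiag_mul_apply_one_one {N : ℕ} (hN : 0 < N)
    {a b : Matrix (Fin 4) (Fin 4) ℝ} (ha : pshape N a)
    (hb : (fun i => b i 1) ∈ paramodularColumns N) :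
    ∃ z : ℤ, (a * heckeDiag N * b) 1 1 = z := by
  have hN' : (N : ℝ) ≠ 0 := by positivity
  obtain ⟨⟨p3, hp3⟩, -, -, -, -, -, -, -, -, ⟨p0, hp0⟩, ⟨p1, hp1⟩, ⟨p2, hp2⟩, -⟩ := ha
  obtain ⟨⟨q0, hq0⟩, ⟨q1, hq1⟩, ⟨q2, hq2⟩, ⟨q3, hq3⟩⟩ := hb
  simp only at hq0 hq1 hq2 hq3
  refine ⟨p0 * q0 + p1 * q1 + N ^ 2 * p2 * q2 + p3 * q3, ?_⟩
  simp [mul_apply, Fin.sum_univ_four, heckeDiag, hp0, hp1, hp2, hp3, hq0, hq1, hq2, hq3]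
  field_simp

lemma intCast_ne_neg_inv_natCast {N : ℕ} (hN : 1 < N) (z : ℤ) : (z : ℝ) ≠ -(N : ℝ)⁻¹ := by
  intro h
  have hzN : z * N = -1 := by
    have : (z : ℝ) * N = -1 := by rw [h]; field_simp
    exact_mod_cast this
  have : (N : ℤ) ∣ 1 := ⟨-z, by linarith⟩
  have := Int.le_of_dvd one_pos this
  omega

lemma mul_heckeDiag_mul_ne_inv_smul_integralW_conj {N : ℕ} (hN : 1 < N)
    {a b : Matrix (Fin 4) (Fin 4) ℝ} (ha : pshape N a)
    (hb : (fun i => b i 1) ∈ paramodularColumns N) :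
    a * heckeDiag N * b ≠ (N : ℝ)⁻¹ • (integralW N * heckeDiag N * integralW N) := by
  intro h
  obtain ⟨z, hz⟩ := exists_int_eq_mul_heckeDiag_mul_apply_one_one (by omega) ha hb
  rw [h, inv_smul_integralW_conj_heckeDiag_apply_one_one (by omega)] at hz
  exact intCast_ne_neg_inv_natCast hN z hz.symm

theorem corollary2_noncommutative_general (N : ℕ) (hN1 : 1 < N)
    (M W : Matrix (Fin 4) (Fin 4) ℝ)
    (hM : M = (N : ℝ)⁻¹ • Matrix.diagonal ![1, (N : ℝ), (N : ℝ) ^ 2, (N : ℝ)])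
    (hW : W = fourBlock ((Real.sqrt N)⁻¹ • !![0, (N : ℝ); -1, 0])
      (((Real.sqrt N)⁻¹ • !![0, (N : ℝ); -1, 0])ᵀ)⁻¹) :
    SigmaN N * {W * M * W} * SigmaN N ≠ SigmaN N * {M} * SigmaN N ∧
    (SigmaN N * {W} * SigmaN N) * (SigmaN N * {M} * SigmaN N) ≠
      (SigmaN N * {M} * SigmaN N) * (SigmaN N * {W} * SigmaN N) := by
  have hN : 0 < N := by omega
  have hconj (d : Matrix (Fin 4) (Fin 4) ℝ) :
      W * d * W = (N : ℝ)⁻¹ • (integralW N * d * integralW N) := by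
    rw [hW, fourBlock_eq_smul_integralW hN]
    exact inv_sqrt_smul_mul_mul_inv_sqrt_smul (Nat.cast_nonneg N) _ _
  have hkey {a b : Matrix (Fin 4) (Fin 4) ℝ} (ha : a ∈ SigmaN N)
      (hb : (fun i => b i 1) ∈ paramodularColumns N) : a * M * b ≠ W * M * W := by
    rw [hconj, hM]
    exact mul_heckeDiag_mul_ne_inv_smul_integralW_conj hN1 ha.2 hb
  have hself := mem_mul_singleton_mul_self (one_mem_SigmaN N) (one_mem_SigmaN N)
  constructor
  · intro hEq
    have hWMW := hself (W * M * W)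
    rw [hEq] at hWMW
    obtain ⟨a, ha, c, hc, h⟩ := DoubleCoset.mem_doubleCoset.1 hWMW
    exact hkey ha hc.2.col_one_mem h.symm
  · intro hEq
    have hWM := Set.mul_mem_mul (hself W) (hself M)
    rw [hEq] at hWM
    obtain ⟨x, hx, y, hy, hxy⟩ := hWM
    obtain ⟨a, ha, b, hb, rfl⟩ := DoubleCoset.mem_doubleCoset.1 hx
    obtain ⟨c, hc, d, hd, rfl⟩ := DoubleCoset.mem_doubleCoset.1 hy
    refine hkey (b := b * (c * (W * d * W))) ha
      (hb.2.col_one_mul_mem hN (hc.2.col_one_mul_mem hN ?_)) ?_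
    · rw [hconj]
      exact col_one_inv_smul_integralW_conj_mem hN hd.2
    · simpa only [mul_assoc] using congrArg (· * W) hxy

/-- Corollary 2 (non-commutativity): for squarefree `N > 1`, with
`M = (1/N)·diag(1, N, N², N)` and `W_N = [[V_N, 0],[0, (V_Nᵀ)⁻¹]]`,
`V_N = (1/√N)·[[0, N],[-1, 0]]`, the double cosets `Σ_N (W_N M W_N) Σ_N` and
`Σ_N M Σ_N` differ; consequently the Hecke algebra of `(Σ_N, 𝔾)` fails to be
commutative: the double cosets of `W_N` and `M` do not commute. -/
theorem corollary2_noncommutative (N : ℕ) (hN : Squarefree N) (hN1 : 1 < N)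
    (M W : Matrix (Fin 4) (Fin 4) ℝ)
    (hM : M = (N : ℝ)⁻¹ • Matrix.diagonal ![1, (N : ℝ), (N : ℝ) ^ 2, (N : ℝ)])
    (hW : W = fourBlock ((Real.sqrt N)⁻¹ • !![0, (N : ℝ); -1, 0])
      (((Real.sqrt N)⁻¹ • !![0, (N : ℝ); -1, 0])ᵀ)⁻¹) :
    SigmaN N * {W * M * W} * SigmaN N ≠ SigmaN N * {M} * SigmaN N ∧
    (SigmaN N * {W} * SigmaN N) * (SigmaN N * {M} * SigmaN N) ≠
      (SigmaN N * {M} * SigmaN N) * (SigmaN N * {W} * SigmaN N) :=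
  corollary2_noncommutative_general N hN1 M W hM hW
end
end
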